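/- Let p, e, s : (0,∞)² → ℝ with e and s twice continuously differentiable and p continuously differentiable, satisfying Gibbs' equation on (0,∞)², and suppose the thermodynamic stability conditions ∂_ϱ p(ϱ,ϑ) > 0 and ∂_ϑ e(ϱ,ϑ) > 0 hold for all ϱ, ϑ > 0. Define the relative entropy E(ϱ,ϑ | r,Θ) = H_Θ(ϱ,ϑ) − ∂_ϱ H_Θ(r,Θ)·(ϱ − r) − H_Θ(r,Θ), where H_Θ(ϱ,ϑ) = ϱ·e(ϱ,ϑ) − Θ·ϱ·s(ϱ,ϑ). Then for all ϱ, ϑ, r, Θ > 0 one has E(ϱ,ϑ | r,Θ) ≥ 0, with equality if and only if ϱ = r and ϑ = Θ. -/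

import Mathlib

/-!
Split the relative entropy as
`E(ϱ,ϑ | r,Θ) = [H_Θ(ϱ,ϑ) - H_Θ(ϱ,Θ)] + [H_Θ(ϱ,Θ) - ∂_ϱ H_Θ(r,Θ)·(ϱ - r) - H_Θ(r,Θ)]`.
By the temperature part of Gibbs' equation, `∂_ϑ H_Θ(ϱ,ϑ) = ϱ ∂_ϑ e(ϱ,ϑ) (ϑ - Θ) / ϑ`, so
`ϑ ↦ H_Θ(ϱ,ϑ)` has a strict minimum at `ϑ = Θ` when `∂_ϑ e > 0`. By the density part,
`∂_ϱ H_Θ(ϱ,Θ)` is the Gibbs potential `g = e - Θ s + p/ϱ`, whose density derivative is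
`∂_ϱ p / ϱ > 0`; hence `ϱ ↦ H_Θ(ϱ,Θ)` is strictly convex and lies strictly above its tangent
at `r` away from `r`.
-/

open Set Function

lemma apply_lt_apply_of_hasDerivAt_mul_sub {f g : ℝ → ℝ} {D : Set ℝ} {a t : ℝ}
    (hD : Convex ℝ D) (hf : ∀ x ∈ D, HasDerivAt f (g x * (x - a)) x) (hg : ∀ x ∈ D, 0 < g x)
    (ha : a ∈ D) (ht : t ∈ D) (hta : t ≠ a) : f a < f t := by
  have hcont : ContinuousOn f D := fun x hx => (hf x hx).continuousAt.continuousWithinAt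
  rcases hta.lt_or_gt with h | h
  · have hsub : Icc t a ⊆ D := hD.ordConnected.out ht ha
    refine strictAntiOn_of_deriv_neg (convex_Icc t a) (hcont.mono hsub) (fun x hx => ?_)
      ⟨le_rfl, h.le⟩ ⟨h.le, le_rfl⟩ h
    rw [interior_Icc] at hx
    have hxD := hsub (Ioo_subset_Icc_self hx)
    rw [(hf x hxD).deriv]
    exact mul_neg_of_pos_of_neg (hg x hxD) (sub_neg.2 hx.2)
  · have hsub : Icc a t ⊆ D := hD.ordConnected.out ha ht
    refine strictMonoOn_of_deriv_pos (convex_Icc a t) (hcont.mono hsub) (fun x hx => ?_)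
      ⟨le_rfl, h.le⟩ ⟨h.le, le_rfl⟩ h
    rw [interior_Icc] at hx
    have hxD := hsub (Ioo_subset_Icc_self hx)
    rw [(hf x hxD).deriv]
    exact mul_pos (hg x hxD) (sub_pos.2 hx.1)

lemma StrictConvexOn.add_mul_sub_lt_of_hasDerivAt {S : Set ℝ} {f : ℝ → ℝ} {f' x y : ℝ}
    (hfc : StrictConvexOn ℝ S f) (hx : x ∈ S) (hy : y ∈ S) (hyx : y ≠ x)
    (hf' : HasDerivAt f f' x) : f x + f' * (y - x) < f y := by
  rcases hyx.lt_or_gt with h | h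
  · have hslope := hfc.slope_lt_of_hasDerivAt hy hx h hf'
    rw [slope_def_field, div_lt_iff₀ (sub_pos.2 h)] at hslope
    linarith
  · have hslope := hfc.lt_slope_of_hasDerivAt hx hy h hf'
    rw [slope_def_field, lt_div_iff₀ (sub_pos.2 h)] at hslope
    linarith

lemma hasDerivAt_deriv_fst {F : ℝ → ℝ → ℝ} {x y : ℝ}
    (hF : DifferentiableAt ℝ (uncurry F) (x, y)) :
    HasDerivAt (fun r => F r y) (deriv (fun r => F r y) x) x := by
  have h := hF.comp x (differentiableAt_id.prodMk (differentiableAt_const y) :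
    DifferentiableAt ℝ (fun r : ℝ => (r, y)) x)
  exact h.hasDerivAt

lemma hasDerivAt_deriv_snd {F : ℝ → ℝ → ℝ} {x y : ℝ}
    (hF : DifferentiableAt ℝ (uncurry F) (x, y)) :
    HasDerivAt (fun t => F x t) (deriv (fun t => F x t) y) y := by
  have h := hF.comp y ((differentiableAt_const x).prodMk differentiableAt_id :
    DifferentiableAt ℝ (fun t : ℝ => (x, t)) y)
  exact h.hasDerivAt

lemma DifferentiableOn.differentiableAt_of_pos {F : ℝ × ℝ → ℝ}
    (hF : DifferentiableOn ℝ F (Ioi 0 ×ˢ Ioi 0)) {x y : ℝ} (hx : 0 < x) (hy : 0 < y) :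
    DifferentiableAt ℝ F (x, y) :=
  hF.differentiableAt ((isOpen_Ioi.prod isOpen_Ioi).mem_nhds ⟨hx, hy⟩)

noncomputable section

/-- `H_Θ(ϱ,ϑ)`, written so that it unfolds to the expression of the theorem. -/
def ballisticFreeEnergy (e s : ℝ → ℝ → ℝ) (Θ ϱ ϑ : ℝ) : ℝ :=
  ϱ * e ϱ ϑ - Θ * (ϱ * s ϱ ϑ)

def gibbsPotential (p e s : ℝ → ℝ → ℝ) (ϱ ϑ : ℝ) : ℝ :=
  e ϱ ϑ - ϑ * s ϱ ϑ + p ϱ ϑ / ϱ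

end

section Thermodynamics

variable {p e s : ℝ → ℝ → ℝ}

lemma hasDerivAt_ballisticFreeEnergy_temp {Θ ϱ ϑ : ℝ}
    (he : DifferentiableAt ℝ (uncurry e) (ϱ, ϑ)) (hs : DifferentiableAt ℝ (uncurry s) (ϱ, ϑ))
    (hϑ : ϑ ≠ 0) (gibbs_temp : ϑ * deriv (fun t => s ϱ t) ϑ = deriv (fun t => e ϱ t) ϑ) :
    HasDerivAt (fun t => ballisticFreeEnergy e s Θ ϱ t)
      (ϱ * deriv (fun t => e ϱ t) ϑ / ϑ * (ϑ - Θ)) ϑ := by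
  have h := ((hasDerivAt_deriv_snd he).const_mul ϱ).sub
    (((hasDerivAt_deriv_snd hs).const_mul ϱ).const_mul Θ)
  refine h.congr_deriv ?_
  rw [← gibbs_temp]
  field_simp

lemma hasDerivAt_ballisticFreeEnergy_dens {Θ ϱ : ℝ}
    (he : DifferentiableAt ℝ (uncurry e) (ϱ, Θ)) (hs : DifferentiableAt ℝ (uncurry s) (ϱ, Θ))
    (hϱ : ϱ ≠ 0)
    (gibbs_dens : Θ * deriv (fun r => s r Θ) ϱ = deriv (fun r => e r Θ) ϱ - p ϱ Θ / ϱ ^ 2) :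
    HasDerivAt (fun x => ballisticFreeEnergy e s Θ x Θ) (gibbsPotential p e s ϱ Θ) ϱ := by
  have h := ((hasDerivAt_id ϱ).mul (hasDerivAt_deriv_fst he)).sub
    (((hasDerivAt_id ϱ).mul (hasDerivAt_deriv_fst hs)).const_mul Θ)
  refine h.congr_deriv ?_
  have hpϱ : ϱ * (p ϱ Θ / ϱ ^ 2) = p ϱ Θ / ϱ := by field_simp
  simp only [gibbsPotential, id]
  linear_combination (-ϱ) * gibbs_dens + hpϱ

lemma hasDerivAt_gibbsPotential_dens {ϱ ϑ : ℝ} (hp : DifferentiableAt ℝ (uncurry p) (ϱ, ϑ))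
    (he : DifferentiableAt ℝ (uncurry e) (ϱ, ϑ)) (hs : DifferentiableAt ℝ (uncurry s) (ϱ, ϑ))
    (hϱ : ϱ ≠ 0)
    (gibbs_dens : ϑ * deriv (fun r => s r ϑ) ϱ = deriv (fun r => e r ϑ) ϱ - p ϱ ϑ / ϱ ^ 2) :
    HasDerivAt (fun x => gibbsPotential p e s x ϑ) (deriv (fun r => p r ϑ) ϱ / ϱ) ϱ := by
  have h := ((hasDerivAt_deriv_fst he).sub ((hasDerivAt_deriv_fst hs).const_mul ϑ)).add
    ((hasDerivAt_deriv_fst hp).div (hasDerivAt_id ϱ) hϱ)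
  refine h.congr_deriv ?_
  rw [gibbs_dens, id]
  field_simp
  ring

lemma ballisticFreeEnergy_lt_of_temp_ne {Θ ϱ ϑ : ℝ}
    (he : DifferentiableOn ℝ (uncurry e) (Ioi 0 ×ˢ Ioi 0))
    (hs : DifferentiableOn ℝ (uncurry s) (Ioi 0 ×ˢ Ioi 0))
    (gibbs_temp : ∀ t, 0 < t → t * deriv (fun t => s ϱ t) t = deriv (fun t => e ϱ t) t)
    (hstab_e : ∀ t, 0 < t → 0 < deriv (fun t => e ϱ t) t)
    (hϱ : 0 < ϱ) (hϑ : 0 < ϑ) (hΘ : 0 < Θ) (hϑΘ : ϑ ≠ Θ) :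
    ballisticFreeEnergy e s Θ ϱ Θ < ballisticFreeEnergy e s Θ ϱ ϑ :=
  apply_lt_apply_of_hasDerivAt_mul_sub (convex_Ioi 0)
    (fun t ht => hasDerivAt_ballisticFreeEnergy_temp (he.differentiableAt_of_pos hϱ ht)
      (hs.differentiableAt_of_pos hϱ ht) (ne_of_gt ht) (gibbs_temp t ht))
    (fun t ht => div_pos (mul_pos hϱ (hstab_e t ht)) ht) hΘ hϑ hϑΘ

lemma strictConvexOn_ballisticFreeEnergy_dens {Θ : ℝ}
    (hp : DifferentiableOn ℝ (uncurry p) (Ioi 0 ×ˢ Ioi 0))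
    (he : DifferentiableOn ℝ (uncurry e) (Ioi 0 ×ˢ Ioi 0))
    (hs : DifferentiableOn ℝ (uncurry s) (Ioi 0 ×ˢ Ioi 0))
    (gibbs_dens : ∀ ϱ, 0 < ϱ →
      Θ * deriv (fun r => s r Θ) ϱ = deriv (fun r => e r Θ) ϱ - p ϱ Θ / ϱ ^ 2)
    (hstab_p : ∀ ϱ, 0 < ϱ → 0 < deriv (fun r => p r Θ) ϱ) (hΘ : 0 < Θ) :
    StrictConvexOn ℝ (Ioi 0) (fun x => ballisticFreeEnergy e s Θ x Θ) := by
  have hH (x : ℝ) (hx : 0 < x) :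
      HasDerivAt (fun x => ballisticFreeEnergy e s Θ x Θ) (gibbsPotential p e s x Θ) x :=
    hasDerivAt_ballisticFreeEnergy_dens (he.differentiableAt_of_pos hx hΘ)
      (hs.differentiableAt_of_pos hx hΘ) (ne_of_gt hx) (gibbs_dens x hx)
  have hg (x : ℝ) (hx : 0 < x) :
      HasDerivAt (fun x => gibbsPotential p e s x Θ) (deriv (fun r => p r Θ) x / x) x :=
    hasDerivAt_gibbsPotential_dens (hp.differentiableAt_of_pos hx hΘ)
      (he.differentiableAt_of_pos hx hΘ) (hs.differentiableAt_of_pos hx hΘ) (ne_of_gt hx)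
      (gibbs_dens x hx)
  have hg_mono : StrictMonoOn (fun x => gibbsPotential p e s x Θ) (Ioi 0) := by
    refine strictMonoOn_of_deriv_pos (convex_Ioi 0)
      (fun x hx => (hg x hx).continuousAt.continuousWithinAt) fun x hx => ?_
    rw [interior_Ioi] at hx
    rw [(hg x hx).deriv]
    exact div_pos (hstab_p x hx) hx
  refine StrictMonoOn.strictConvexOn_of_deriv (convex_Ioi 0)
    (fun x hx => (hH x hx).continuousAt.continuousWithinAt) ?_
  rw [interior_Ioi]
  intro x hx y hy hxy
  rw [(hH x hx).deriv, (hH y hy).deriv]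
  exact hg_mono hx hy hxy

end Thermodynamics
/-- Under Gibbs' equation (with `e, s` twice continuously
differentiable and `p` continuously differentiable) and thermodynamic stability
(`∂_ϱ p > 0`, `∂_ϑ e > 0`), the relative entropy
`E(ϱ,ϑ | r,Θ) = H_Θ(ϱ,ϑ) − ∂_ϱ H_Θ(r,Θ)·(ϱ − r) − H_Θ(r,Θ)`, with
`H_Θ(ϱ,ϑ) = ϱ·e(ϱ,ϑ) − Θ·ϱ·s(ϱ,ϑ)`, is nonnegative for all `ϱ, ϑ, r, Θ > 0`,
and vanishes if and only if `ϱ = r` and `ϑ = Θ`. -/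
theorem relative_entropy_nonneg_and_vanishes_iff
    (p e s : ℝ → ℝ → ℝ)
    (hp : ContDiffOn ℝ 1 (fun q : ℝ × ℝ => p q.1 q.2)
      (Set.Ioi (0 : ℝ) ×ˢ Set.Ioi (0 : ℝ)))
    (he : ContDiffOn ℝ 2 (fun q : ℝ × ℝ => e q.1 q.2)
      (Set.Ioi (0 : ℝ) ×ˢ Set.Ioi (0 : ℝ)))
    (hs : ContDiffOn ℝ 2 (fun q : ℝ × ℝ => s q.1 q.2)
      (Set.Ioi (0 : ℝ) ×ˢ Set.Ioi (0 : ℝ)))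
    (gibbs_temp : ∀ ϱ ϑ : ℝ, 0 < ϱ → 0 < ϑ →
      ϑ * deriv (fun t => s ϱ t) ϑ = deriv (fun t => e ϱ t) ϑ)
    (gibbs_dens : ∀ ϱ ϑ : ℝ, 0 < ϱ → 0 < ϑ →
      ϑ * deriv (fun r => s r ϑ) ϱ
        = deriv (fun r => e r ϑ) ϱ - p ϱ ϑ / ϱ ^ 2)
    (hstab_p : ∀ ϱ ϑ : ℝ, 0 < ϱ → 0 < ϑ → 0 < deriv (fun r => p r ϑ) ϱ)
    (hstab_e : ∀ ϱ ϑ : ℝ, 0 < ϱ → 0 < ϑ → 0 < deriv (fun t => e ϱ t) ϑ) :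
    ∀ ϱ ϑ r Θ : ℝ, 0 < ϱ → 0 < ϑ → 0 < r → 0 < Θ →
      0 ≤ (ϱ * e ϱ ϑ - Θ * (ϱ * s ϱ ϑ))
          - deriv (fun x => x * e x Θ - Θ * (x * s x Θ)) r * (ϱ - r)
          - (r * e r Θ - Θ * (r * s r Θ)) ∧
      ((ϱ * e ϱ ϑ - Θ * (ϱ * s ϱ ϑ))
          - deriv (fun x => x * e x Θ - Θ * (x * s x Θ)) r * (ϱ - r)
          - (r * e r Θ - Θ * (r * s r Θ)) = 0 ↔ ϱ = r ∧ ϑ = Θ) := by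
  intro ϱ ϑ r Θ hϱ hϑ hr hΘ
  have hp' := hp.differentiableOn one_ne_zero
  have he' := he.differentiableOn two_ne_zero
  have hs' := hs.differentiableOn two_ne_zero
  have hH : HasDerivAt (fun x => ballisticFreeEnergy e s Θ x Θ) (gibbsPotential p e s r Θ) r :=
    hasDerivAt_ballisticFreeEnergy_dens (he'.differentiableAt_of_pos hr hΘ)
      (hs'.differentiableAt_of_pos hr hΘ) (ne_of_gt hr) (gibbs_dens r Θ hr hΘ)
  have htemp (h : ϑ ≠ Θ) : ballisticFreeEnergy e s Θ ϱ Θ < ballisticFreeEnergy e s Θ ϱ ϑ :=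
    ballisticFreeEnergy_lt_of_temp_ne he' hs' (gibbs_temp ϱ · hϱ) (hstab_e ϱ · hϱ) hϱ hϑ hΘ h
  have hdens (h : ϱ ≠ r) : ballisticFreeEnergy e s Θ r Θ + gibbsPotential p e s r Θ * (ϱ - r)
      < ballisticFreeEnergy e s Θ ϱ Θ :=
    (strictConvexOn_ballisticFreeEnergy_dens hp' he' hs' (gibbs_dens · Θ · hΘ)
      (hstab_p · Θ · hΘ) hΘ).add_mul_sub_lt_of_hasDerivAt hr hϱ h hH
  have htemp_le : ballisticFreeEnergy e s Θ ϱ Θ ≤ ballisticFreeEnergy e s Θ ϱ ϑ := by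
    rcases eq_or_ne ϑ Θ with rfl | h
    exacts [le_rfl, (htemp h).le]
  have hdens_le : ballisticFreeEnergy e s Θ r Θ + gibbsPotential p e s r Θ * (ϱ - r)
      ≤ ballisticFreeEnergy e s Θ ϱ Θ := by
    rcases eq_or_ne ϱ r with rfl | h
    exacts [by simp, (hdens h).le]
  rw [show deriv (fun x => x * e x Θ - Θ * (x * s x Θ)) r = _ from hH.deriv]
  unfold ballisticFreeEnergy at *
  refine ⟨by linarith, fun h0 => ⟨?_, ?_⟩, by rintro ⟨rfl, rfl⟩; ring⟩
  · by_contra h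
    linarith [hdens h]
  · by_contra h
    linarith [htemp h]
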